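/- Let a < b, c ≥ 0, and let f : [a,b] → ℝ be continuous and strongly η-convex with respect to η and modulus c. Then (1/(b−a)) ∫_a^b f(x) dx ≤ (f(a)+f(b))/2 + (η(f(a),f(b)) + η(f(b),f(a)))/4 − (c/6)·(b−a)². -/

import Mathlib

/-!
Fix `x ∈ [a, b]`. Writing `x` as a convex combination of `a` and `b` in the two possible orders
and applying strong η-convexity gives two upper bounds for `f x`; their average is a quadratic
polynomial in `x` whose leading part is `-c (b - x) (x - a)`. Integrating this bound over `[a, b]`
gives the inequality, the term `(c / 6) (b - a)²` coming from `∫ (b - x) (x - a) = (b - a)³ / 6`.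
-/

open Set intervalIntegral

def StronglyEtaConvexOn (s : Set ℝ) (η : ℝ → ℝ → ℝ) (c : ℝ) (f : ℝ → ℝ) : Prop :=
  ∀ x ∈ s, ∀ y ∈ s, ∀ t ∈ Icc (0 : ℝ) 1,
    f (t * x + (1 - t) * y) ≤ f y + t * η (f x) (f y) - c * t * (1 - t) * (x - y) ^ 2

namespace StronglyEtaConvexOn

variable {s : Set ℝ} {η : ℝ → ℝ → ℝ} {c : ℝ} {f : ℝ → ℝ}

/-- The defining inequality at `x = t * u + (1 - t) * v`, i.e. `t = (v - x) / (v - u)`. -/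
theorem le_of_div_mem_Icc (h : StronglyEtaConvexOn s η c f) {u v x : ℝ} (hu : u ∈ s)
    (hv : v ∈ s) (huv : u ≠ v) (ht : (v - x) / (v - u) ∈ Icc (0 : ℝ) 1) :
    f x ≤ f v + (v - x) / (v - u) * η (f u) (f v) - c * ((v - x) * (x - u)) := by
  have hvu : v - u ≠ 0 := sub_ne_zero.mpr huv.symm
  have hx : (v - x) / (v - u) * u + (1 - (v - x) / (v - u)) * v = x := by
    field_simp; ring
  have hc : c * ((v - x) / (v - u)) * (1 - (v - x) / (v - u)) * (u - v) ^ 2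
      = c * ((v - x) * (x - u)) := by
    field_simp; ring
  simpa only [hx, hc] using h u hu v hv _ ht

theorem le_of_mem_Icc {a b : ℝ} (h : StronglyEtaConvexOn (Icc a b) η c f) (hab : a < b)
    {x : ℝ} (hx : x ∈ Icc a b) :
    f x ≤ (f a + f b) / 2 + ((b - x) * η (f a) (f b) + (x - a) * η (f b) (f a)) / (2 * (b - a))
      - c * ((b - x) * (x - a)) := by
  obtain ⟨hax, hxb⟩ := hx
  have hba : 0 < b - a := sub_pos.mpr hab
  have ha : a ∈ Icc a b := left_mem_Icc.mpr hab.le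
  have hb : b ∈ Icc a b := right_mem_Icc.mpr hab.le
  have hswap : (a - x) / (a - b) = (x - a) / (b - a) := by
    rw [← neg_div_neg_eq, neg_sub, neg_sub]
  have hfrom_a := h.le_of_div_mem_Icc ha hb hab.ne (x := x)
    ⟨div_nonneg (by linarith) hba.le, (div_le_one hba).mpr (by linarith)⟩
  have hfrom_b := h.le_of_div_mem_Icc hb ha hab.ne' (x := x) (by
    rw [hswap]
    exact ⟨div_nonneg (by linarith) hba.le, (div_le_one hba).mpr (by linarith)⟩)
  rw [hswap] at hfrom_b
  have hsplit : ((b - x) * η (f a) (f b) + (x - a) * η (f b) (f a)) / (2 * (b - a))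
      = ((b - x) / (b - a) * η (f a) (f b) + (x - a) / (b - a) * η (f b) (f a)) / 2 := by
    field_simp
  rw [hsplit]
  linarith

end StronglyEtaConvexOn

theorem integral_sub_mul_sub (a b : ℝ) : ∫ x in a..b, (b - x) * (x - a) = (b - a) ^ 3 / 6 := by
  have hexpand : (fun x : ℝ => (b - x) * (x - a)) = fun x => -(a * b) + (a + b) * x - x ^ 2 := by
    funext x; ring
  rw [hexpand, integral_sub, integral_add, integral_const_mul] <;>
    try exact Continuous.intervalIntegrable (by fun_prop) _ _
  simp
  ring

theorem integral_sub_mul_add_sub_mul (a b p q : ℝ) :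
    ∫ x in a..b, ((b - x) * p + (x - a) * q) = (p + q) * (b - a) ^ 2 / 2 := by
  rw [integral_add, integral_mul_const, integral_mul_const, integral_comp_sub_left (fun x => x),
    integral_comp_sub_right (fun x => x)] <;>
    try exact Continuous.intervalIntegrable (by fun_prop) _ _
  simp
  ring

theorem stmt_9_general (a b c : ℝ) (hab : a < b)
    (f : ℝ → ℝ) (η : ℝ → ℝ → ℝ)
    (hcont : ContinuousOn f (Set.Icc a b))
    (hf : ∀ x ∈ Set.Icc a b, ∀ y ∈ Set.Icc a b, ∀ t ∈ Set.Icc (0:ℝ) 1,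
      f (t * x + (1 - t) * y) ≤ f y + t * η (f x) (f y) - c * t * (1 - t) * (x - y)^2) :
    (1 / (b - a)) * ∫ x in a..b, f x ≤
      (f a + f b) / 2 + (η (f a) (f b) + η (f b) (f a)) / 4 - (c / 6) * (b - a)^2 := by
  have hconv : StronglyEtaConvexOn (Icc a b) η c f := hf
  have hba : 0 < b - a := sub_pos.mpr hab
  have hbound : ∫ x in a..b, f x ≤ ∫ x in a..b, ((f a + f b) / 2
      + ((b - x) * η (f a) (f b) + (x - a) * η (f b) (f a)) / (2 * (b - a))
      - c * ((b - x) * (x - a))) :=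
    integral_mono_on hab.le (hcont.intervalIntegrable_of_Icc hab.le)
      (Continuous.intervalIntegrable (by fun_prop) _ _) fun x hx => hconv.le_of_mem_Icc hab hx
  rw [integral_sub, integral_add, integral_const, integral_div, integral_const_mul,
    integral_sub_mul_add_sub_mul, integral_sub_mul_sub, smul_eq_mul] at hbound <;>
    try exact Continuous.intervalIntegrable (by fun_prop) _ _
  rw [one_div_mul_eq_div, div_le_iff₀ hba]
  refine hbound.trans_eq ?_
  field_simp
  ring

theorem stmt_9 (a b c : ℝ) (hab : a < b) (hc : 0 ≤ c)
    (f : ℝ → ℝ) (η : ℝ → ℝ → ℝ)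
    (hcont : ContinuousOn f (Set.Icc a b))
    (hf : ∀ x ∈ Set.Icc a b, ∀ y ∈ Set.Icc a b, ∀ t ∈ Set.Icc (0:ℝ) 1,
      f (t * x + (1 - t) * y) ≤ f y + t * η (f x) (f y) - c * t * (1 - t) * (x - y)^2) :
    (1 / (b - a)) * ∫ x in a..b, f x ≤
      (f a + f b) / 2 + (η (f a) (f b) + η (f b) (f a)) / 4 - (c / 6) * (b - a)^2 :=
  stmt_9_general a b c hab f η hcont hf
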